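/- In the discrete model, for every fixed q ≥ 2 and fixed 0 ≤ i ≤ n, the function j ↦ max( T(q−1, j−1), w_{ji} ) on {0,...,i} is unimodal with a unique minimum value. -/
import Mathlib


/-- Maximum of `f` over a finite set of indices, with the empty maximum being `0`. -/
noncomputable def maxOver (S : Finset ℕ) (f : ℕ → ℝ) : ℝ := S.fold max 0 f

/-- Discrete-model 1-sink evacuation time `Θ¹([x_l,x_r], x_t)` with capacity `c`. -/
noncomputable def theta1D (x : ℕ → ℝ) (τ : ℝ) (c : ℕ) (w : ℕ → ℕ) (l t r : ℕ) : ℝ :=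
  max
    (maxOver (Finset.Ico l t) (fun i =>
      (x t - x i) * τ + (⌈((∑ j ∈ Finset.Icc l i, w j : ℕ) : ℝ) / (c : ℝ)⌉ : ℝ) - 1))
    (maxOver (Finset.Ioc t r) (fun i =>
      (x i - x t) * τ + (⌈((∑ j ∈ Finset.Icc i r, w j : ℕ) : ℝ) / (c : ℝ)⌉ : ℝ) - 1))

/-- A partition of `{l,…,r}` into `m` consecutive nonempty blocks
`{lf p, …, rf p}` (`p ∈ {1,…,m}`) with a sink `tf p` in each block. -/
def IsPartitionSinks (l r m : ℕ) (lf rf tf : ℕ → ℕ) : Prop :=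
  lf 1 = l ∧ rf m = r ∧ (∀ p, 1 ≤ p → p < m → lf (p + 1) = rf p + 1) ∧
  (∀ p, 1 ≤ p → p ≤ m → lf p ≤ rf p) ∧
  (∀ p, 1 ≤ p → p ≤ m → lf p ≤ tf p ∧ tf p ≤ rf p)

/-- Optimal `q`-sink evacuation time of the subpath `[x_l, x_r]`: minimum over
partitions into at most `q` consecutive nonempty blocks with sinks of the
maximum block 1-sink evacuation time. -/
noncomputable def optEvac (x : ℕ → ℝ) (τ : ℝ) (c : ℕ) (w : ℕ → ℕ) (l r q : ℕ) : ℝ :=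
  sInf {v : ℝ | ∃ m lf rf tf, 1 ≤ m ∧ m ≤ q ∧ IsPartitionSinks l r m lf rf tf ∧
    maxOver (Finset.Icc 1 m) (fun p => theta1D x τ c w (lf p) (tf p) (rf p)) = v}

/-- `w_{ji}`: optimal 1-sink evacuation time of `[x_j, x_i]`. -/
noncomputable def w1 (x : ℕ → ℝ) (τ : ℝ) (c : ℕ) (w : ℕ → ℕ) (j i : ℕ) : ℝ :=
  sInf {v : ℝ | ∃ t, j ≤ t ∧ t ≤ i ∧ theta1D x τ c w j t i = v}

/-- `T(q, i)`: optimal `q`-sink evacuation time of `[x_0, x_i]`. -/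
noncomputable def Tfun (x : ℕ → ℝ) (τ : ℝ) (c : ℕ) (w : ℕ → ℕ) (q i : ℕ) : ℝ :=
  optEvac x τ c w 0 i q

/-- `T(q, j−1)` with the convention `T(q, −1) = 0` (for `j = 0`). -/
noncomputable def Tprev (x : ℕ → ℝ) (τ : ℝ) (c : ℕ) (w : ℕ → ℕ) (q j : ℕ) : ℝ :=
  if j = 0 then 0 else Tfun x τ c w q (j - 1)

lemma maxOver_nonneg (S : Finset ℕ) (f : ℕ → ℝ) : 0 ≤ maxOver S f := by
  rw [maxOver, Finset.le_fold_max]; left; rfl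

lemma maxOver_le {S : Finset ℕ} {f : ℕ → ℝ} {B : ℝ} (hB : 0 ≤ B)
    (h : ∀ p ∈ S, f p ≤ B) : maxOver S f ≤ B := by
  rw [maxOver, Finset.fold_max_le]; exact ⟨hB, h⟩

lemma le_maxOver {S : Finset ℕ} {f : ℕ → ℝ} {p : ℕ} (hp : p ∈ S) :
    f p ≤ maxOver S f := by
  rw [maxOver, Finset.le_fold_max]; exact Or.inr ⟨p, hp, le_rfl⟩

lemma maxOver_empty (f : ℕ → ℝ) : maxOver ∅ f = 0 := rfl

lemma theta1D_nonneg (x τ c w l t r) : 0 ≤ theta1D x τ c w l t r :=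
  le_trans (maxOver_nonneg _ _) (le_max_left _ _)

lemma ceil_div_mono {c a b : ℕ} (hc : 1 ≤ c) (h : a ≤ b) :
    ((⌈(a : ℝ) / (c : ℝ)⌉ : ℤ) : ℝ) ≤ ((⌈(b : ℝ) / (c : ℝ)⌉ : ℤ) : ℝ) := by
  have hc' : (0:ℝ) < c := by exact_mod_cast hc
  have hab : (a:ℝ) ≤ b := by exact_mod_cast h
  exact_mod_cast Int.ceil_le_ceil (by gcongr)

lemma csInf_le_csInf_exists {S T : Set ℝ} (hS : BddBelow S) (hT : T.Nonempty)
    (h : ∀ y ∈ T, ∃ x ∈ S, x ≤ y) : sInf S ≤ sInf T :=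
  le_csInf hT fun y hy => by
    obtain ⟨u, hu, huy⟩ := h y hy
    exact le_trans (csInf_le hS hu) huy

section Mono
variable {n : ℕ} {x : ℕ → ℝ} {τ : ℝ} {c : ℕ} {w : ℕ → ℕ}

lemma x_mono (hx : ∀ i, i < n → x i < x (i + 1)) :
    ∀ {i j : ℕ}, i ≤ j → j ≤ n → x i ≤ x j := by
  intro i j hij hj
  induction j with
  | zero => interval_cases i; rfl
  | succ k ih =>
    rcases Nat.lt_or_ge i (k + 1) with h | h
    · exact le_trans (ih (by omega) (by omega)) (le_of_lt (hx k (by omega)))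
    · have : i = k + 1 := by omega
      rw [this]

/-- shrink right endpoint, same sink -/
lemma thetaA (hc : 1 ≤ c) {l t r r' : ℕ} (hr : r ≤ r') :
    theta1D x τ c w l t r ≤ theta1D x τ c w l t r' := by
  apply max_le_max le_rfl
  apply maxOver_le (maxOver_nonneg _ _)
  intro p hp
  simp only [Finset.mem_Ioc] at hp
  refine le_trans ?_ (le_maxOver (p := p) (by simp [Finset.mem_Ioc]; omega))
  have : (∑ j ∈ Finset.Icc p r, w j) ≤ ∑ j ∈ Finset.Icc p r', w j :=
    Finset.sum_le_sum_of_subset (Finset.Icc_subset_Icc le_rfl hr)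
  have := ceil_div_mono (a := ∑ j ∈ Finset.Icc p r, w j)
    (b := ∑ j ∈ Finset.Icc p r', w j) hc this
  linarith

/-- sink beyond r: move sink to r and shrink -/
lemma thetaA' (hx : ∀ i, i < n → x i < x (i + 1)) (hτ : 0 < τ)
    {l t r r' : ℕ} (h1 : r < t) (h2 : t ≤ r') (hn : r' ≤ n) :
    theta1D x τ c w l r r ≤ theta1D x τ c w l t r' := by
  apply max_le
  · refine le_trans ?_ (le_max_left _ _)
    apply maxOver_le (maxOver_nonneg _ _)
    intro p hp
    simp only [Finset.mem_Ico] at hp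
    refine le_trans ?_ (le_maxOver (p := p) (by simp [Finset.mem_Ico]; omega))
    have hxx : x r ≤ x t := x_mono hx (le_of_lt h1) (le_trans h2 hn)
    nlinarith
  · rw [Finset.Ioc_self, maxOver_empty]
    exact theta1D_nonneg _ _ _ _ _ _ _

/-- shrink left endpoint, same sink -/
lemma thetaB (hc : 1 ≤ c) {l l' t r : ℕ} (hl : l ≤ l') :
    theta1D x τ c w l' t r ≤ theta1D x τ c w l t r := by
  apply max_le_max _ le_rfl
  apply maxOver_le (maxOver_nonneg _ _)
  intro p hp
  simp only [Finset.mem_Ico] at hp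
  refine le_trans ?_ (le_maxOver (p := p) (by simp [Finset.mem_Ico]; omega))
  have : (∑ j ∈ Finset.Icc l' p, w j) ≤ ∑ j ∈ Finset.Icc l p, w j :=
    Finset.sum_le_sum_of_subset (Finset.Icc_subset_Icc hl le_rfl)
  have := ceil_div_mono (a := ∑ j ∈ Finset.Icc l' p, w j)
    (b := ∑ j ∈ Finset.Icc l p, w j) hc this
  linarith

/-- sink before l': move sink to l' -/
lemma thetaB' (hx : ∀ i, i < n → x i < x (i + 1)) (hτ : 0 < τ)
    {l l' t r : ℕ} (h1 : t < l') (hn : r ≤ n) (hl'r : l' ≤ r) :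
    theta1D x τ c w l' l' r ≤ theta1D x τ c w l t r := by
  apply max_le
  · rw [Finset.Ico_self, maxOver_empty]
    exact theta1D_nonneg _ _ _ _ _ _ _
  · refine le_trans ?_ (le_max_right _ _)
    apply maxOver_le (maxOver_nonneg _ _)
    intro p hp
    simp only [Finset.mem_Ioc] at hp
    refine le_trans ?_ (le_maxOver (p := p) (by simp [Finset.mem_Ioc]; omega))
    have hxx : x t ≤ x l' := x_mono hx (le_of_lt h1) (le_trans hl'r hn)
    nlinarith

lemma w1_bddBelow (i j : ℕ) :
    BddBelow {v : ℝ | ∃ t, j ≤ t ∧ t ≤ i ∧ theta1D x τ c w j t i = v} :=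
  ⟨0, fun v ⟨t, _, _, ht⟩ => ht ▸ theta1D_nonneg x τ c w j t i⟩

lemma w1_nonempty {i j : ℕ} (hji : j ≤ i) :
    {v : ℝ | ∃ t, j ≤ t ∧ t ≤ i ∧ theta1D x τ c w j t i = v}.Nonempty :=
  ⟨theta1D x τ c w j j i, j, le_rfl, hji, rfl⟩

lemma w1_nonneg {i j : ℕ} (hji : j ≤ i) : 0 ≤ w1 x τ c w j i :=
  le_csInf (w1_nonempty hji) fun v ⟨t, _, _, ht⟩ => ht ▸ theta1D_nonneg x τ c w j t i

lemma w1_anti (hx : ∀ i, i < n → x i < x (i + 1)) (hτ : 0 < τ) (hc : 1 ≤ c)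
    {i j j' : ℕ} (hjj' : j ≤ j') (hj'i : j' ≤ i) (hin : i ≤ n) :
    w1 x τ c w j' i ≤ w1 x τ c w j i := by
  apply csInf_le_csInf_exists (w1_bddBelow i j') (w1_nonempty (le_trans hjj' hj'i))
  rintro y ⟨t, hjt, hti, rfl⟩
  by_cases h : j' ≤ t
  · exact ⟨theta1D x τ c w j' t i, ⟨t, h, hti, rfl⟩, thetaB hc hjj'⟩
  · exact ⟨theta1D x τ c w j' j' i, ⟨j', le_rfl, hj'i, rfl⟩,
      thetaB' hx hτ (by omega) hin hj'i⟩

lemma evac_bddBelow (l r q : ℕ) :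
    BddBelow {v : ℝ | ∃ m lf rf tf, 1 ≤ m ∧ m ≤ q ∧ IsPartitionSinks l r m lf rf tf ∧
      maxOver (Finset.Icc 1 m) (fun p => theta1D x τ c w (lf p) (tf p) (rf p)) = v} :=
  ⟨0, fun v ⟨m, lf, rf, tf, _, _, _, hv⟩ => hv ▸ maxOver_nonneg _ _⟩

lemma evac_nonempty {r q : ℕ} (hq : 1 ≤ q) :
    {v : ℝ | ∃ m lf rf tf, 1 ≤ m ∧ m ≤ q ∧ IsPartitionSinks 0 r m lf rf tf ∧
      maxOver (Finset.Icc 1 m) (fun p => theta1D x τ c w (lf p) (tf p) (rf p)) = v}.Nonempty := by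
  refine ⟨_, 1, (fun _ => 0), (fun _ => r), (fun _ => 0), le_rfl, hq, ?_, rfl⟩
  refine ⟨rfl, rfl, fun p h1 h2 => by omega, fun p _ _ => Nat.zero_le r,
    fun p _ _ => ⟨le_rfl, Nat.zero_le r⟩⟩

lemma Tfun_nonneg {r q : ℕ} (hq : 1 ≤ q) : 0 ≤ Tfun x τ c w q r :=
  le_csInf (evac_nonempty hq) fun v ⟨m, lf, rf, tf, _, _, _, hv⟩ => hv ▸ maxOver_nonneg _ _

lemma Tfun_mono (hx : ∀ i, i < n → x i < x (i + 1)) (hτ : 0 < τ) (hc : 1 ≤ c)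
    {q r r' : ℕ} (hq : 1 ≤ q) (hr : r ≤ r') (hn : r' ≤ n) :
    Tfun x τ c w q r ≤ Tfun x τ c w q r' := by
  apply csInf_le_csInf_exists (evac_bddBelow 0 r q) (evac_nonempty hq)
  rintro y ⟨m, lf, rf, tf, hm1, hmq, ⟨h1, h2, h3, h4, h5⟩, rfl⟩
  classical
  have hrfstep : ∀ k, 1 ≤ k → k < m → rf k < rf (k + 1) := by
    intro k hk hkm
    have := h3 k hk hkm
    have := h4 (k + 1) (by omega) (by omega)
    omega
  have hrfmono : ∀ d p, 1 ≤ p → p + d ≤ m → rf p ≤ rf (p + d) := by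
    intro d
    induction d with
    | zero => intro p _ _; simp
    | succ k ih =>
      intro p hp hpd
      have h1' := ih p hp (by omega)
      have h2' := hrfstep (p + k) (by omega) (by omega)
      have heq : p + (k + 1) = (p + k) + 1 := rfl
      rw [heq]
      omega
  have hrfn : ∀ p, 1 ≤ p → p ≤ m → rf p ≤ r' := by
    intro p hp hpm
    have := hrfmono (m - p) p hp (by omega)
    have heq : p + (m - p) = m := by omega
    rw [heq] at this
    omega
  have hex : ∃ p, 1 ≤ p ∧ p ≤ m ∧ r ≤ rf p := ⟨m, hm1, le_rfl, by omega⟩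
  obtain ⟨p0, hp0min, hp01, hp0m, hp0r⟩ :
      ∃ p0, (∀ p, p < p0 → ¬(1 ≤ p ∧ p ≤ m ∧ r ≤ rf p)) ∧
        1 ≤ p0 ∧ p0 ≤ m ∧ r ≤ rf p0 := by
    refine ⟨Nat.find hex, fun p hp => Nat.find_min hex hp, ?_, ?_, ?_⟩ <;>
      [exact (Nat.find_spec hex).1; exact (Nat.find_spec hex).2.1;
       exact (Nat.find_spec hex).2.2]
  have hlt : ∀ p, 1 ≤ p → p < p0 → rf p < r := by
    intro p hp hpl
    have := hp0min p hpl
    push_neg at this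
    exact this hp (by omega)
  have hlp0 : lf p0 ≤ r := by
    rcases Nat.eq_or_lt_of_le hp01 with h | h
    · rw [← h, h1]; exact Nat.zero_le r
    · have h3' := h3 (p0 - 1) (by omega) (by omega)
      have := hlt (p0 - 1) (by omega) (by omega)
      have heq : p0 - 1 + 1 = p0 := by omega
      rw [heq] at h3'
      omega
  refine ⟨_, ⟨p0, lf, (fun p => if p = p0 then r else rf p),
    (fun p => if p = p0 then min (tf p0) r else tf p), hp01, le_trans hp0m hmq,
    ⟨h1, by simp, ?_, ?_, ?_⟩, rfl⟩, ?_⟩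
  · intro p hp hplt
    simp only [if_neg (show p ≠ p0 by omega)]
    exact h3 p hp (by omega)
  · intro p hp hpm
    by_cases h : p = p0
    · simp only [h, if_pos rfl]
      exact hlp0
    · simp only [if_neg h]
      exact h4 p hp (by omega)
  · intro p hp hpm
    by_cases h : p = p0
    · simp only [h, if_pos rfl]
      exact ⟨le_min (h5 p0 hp01 hp0m).1 hlp0, min_le_right _ _⟩
    · simp only [if_neg h]
      exact h5 p hp (by omega)
  · apply maxOver_le (maxOver_nonneg _ _)
    intro p hp
    simp only [Finset.mem_Icc] at hp
    by_cases h : p = p0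
    · simp only [h, eq_self_iff_true, if_true]
      refine le_trans ?_ (le_maxOver (p := p0) (Finset.mem_Icc.mpr ⟨hp01, hp0m⟩))
      by_cases h2' : tf p0 ≤ r
      · rw [min_eq_left h2']
        exact thetaA hc hp0r
      · rw [min_eq_right (by omega)]
        exact thetaA' hx hτ (by omega) (h5 p0 hp01 hp0m).2
          (le_trans (hrfn p0 hp01 hp0m) hn)
    · simp only [if_neg h]
      exact le_maxOver (f := fun p => theta1D x τ c w (lf p) (tf p) (rf p))
        (p := p) (Finset.mem_Icc.mpr ⟨hp.1, by omega⟩)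

lemma Tprev_mono (hx : ∀ i, i < n → x i < x (i + 1)) (hτ : 0 < τ) (hc : 1 ≤ c)
    {q a a' : ℕ} (hq : 1 ≤ q) (haa' : a ≤ a') (hn : a' ≤ n + 1) :
    Tprev x τ c w q a ≤ Tprev x τ c w q a' := by
  unfold Tprev
  by_cases h : a = 0
  · rw [if_pos h]
    by_cases h' : a' = 0
    · rw [if_pos h']
    · rw [if_neg h']; exact Tfun_nonneg hq
  · rw [if_neg h, if_neg (by omega)]
    exact Tfun_mono hx hτ hc hq (by omega) (by omega)

end Mono

/-- for fixed `q ≥ 2` and `i`, the function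
`j ↦ max(T(q−1, j−1), w_{ji})` is unimodal with a unique minimum value on
`{0, …, i}`. -/
theorem stmt_12 (n : ℕ) (x : ℕ → ℝ) (τ : ℝ) (c : ℕ) (w : ℕ → ℕ)
    (hx : ∀ i, i < n → x i < x (i + 1)) (hτ : 0 < τ) (hc : 1 ≤ c)
    (hw : ∀ i, i ≤ n → 0 < w i)
    (q i : ℕ) (hq : 2 ≤ q) (hi : i ≤ n) :
    ∃ m, m ≤ i ∧
      (∀ a a', a ≤ a' → a' ≤ m →
        max (Tprev x τ c w (q - 1) a') (w1 x τ c w a' i) ≤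
        max (Tprev x τ c w (q - 1) a) (w1 x τ c w a i)) ∧
      (∀ a a', m ≤ a → a ≤ a' → a' ≤ i →
        max (Tprev x τ c w (q - 1) a) (w1 x τ c w a i) ≤
        max (Tprev x τ c w (q - 1) a') (w1 x τ c w a' i)) := by
  set f := fun a => Tprev x τ c w (q - 1) a with hf
  set g := fun a => w1 x τ c w a i with hg
  have hq1 : 1 ≤ q - 1 := by omega
  have hfmono : ∀ a a', a ≤ a' → a' ≤ i → f a ≤ f a' :=
    fun a a' h h' => Tprev_mono hx hτ hc hq1 h (by omega)
  have hganti : ∀ a a', a ≤ a' → a' ≤ i → g a' ≤ g a :=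
    fun a a' h h' => w1_anti hx hτ hc h h' hi
  obtain ⟨m, hm_mem, hmin⟩ := (Finset.Icc 0 i).exists_min_image
    (fun a => max (f a) (g a)) ⟨0, by simp⟩
  simp only [Finset.mem_Icc] at hm_mem
  refine ⟨m, hm_mem.2, ?_, ?_⟩
  · intro a a' haa' ha'm
    have h1 : f a' ≤ max (f m) (g m) :=
      le_trans (hfmono a' m ha'm hm_mem.2) (le_max_left _ _)
    have h2 : g a' ≤ max (f a) (g a) :=
      le_trans (hganti a a' haa' (by omega)) (le_max_right _ _)
    have h3 : max (f m) (g m) ≤ max (f a) (g a) :=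
      hmin a (Finset.mem_Icc.mpr ⟨Nat.zero_le _, by omega⟩)
    exact max_le (le_trans h1 h3) h2
  · intro a a' hma haa' ha'
    have h1 : f a ≤ max (f a') (g a') :=
      le_trans (hfmono a a' haa' ha') (le_max_left _ _)
    have h2 : g a ≤ max (f m) (g m) :=
      le_trans (hganti m a hma (by omega)) (le_max_right _ _)
    have h3 : max (f m) (g m) ≤ max (f a') (g a') :=
      hmin a' (Finset.mem_Icc.mpr ⟨Nat.zero_le _, ha'⟩)
    exact max_le h1 (le_trans h2 h3)
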